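/- Let ξ ∈ ℝ³ be a nonzero covector. Then the linear map σ_ξ : ℝ × ℝ³ → ℝ × ℝ³ given by σ_ξ(X, X_i) = (2|ξ|²X, |ξ|²ξ^j ξ_{(i}X_{j)} + |ξ|² ξ_i ξ^j X_j) is a linear isomorphism, where |ξ|² = δ^{ij}ξ_iξ_j and ξ_{(i}X_{j)} = (ξ_iX_j + ξ_jX_i)/2. -/
import Mathlib


/-- Squared Euclidean norm of a covector on ℝ³. -/
noncomputable def sqNorm (ξ : Fin 3 → ℝ) : ℝ := ∑ i, ξ i ^ 2

/-- The principal symbol σ_ξ of the operator 𝒫∘𝒫*. -/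
noncomputable def symbolMap (ξ : Fin 3 → ℝ) : ℝ × (Fin 3 → ℝ) → ℝ × (Fin 3 → ℝ) :=
  fun p =>
    (2 * sqNorm ξ * p.1,
     fun i => (∑ j, ξ j * (sqNorm ξ * ((ξ i * p.2 j + ξ j * p.2 i) / 2)))
                + ξ i * sqNorm ξ * (∑ j, ξ j * p.2 j))

noncomputable def invMap (ξ : Fin 3 → ℝ) : ℝ × (Fin 3 → ℝ) → ℝ × (Fin 3 → ℝ) :=
  fun p =>
    (p.1 / (2 * sqNorm ξ),
     fun i => (2 / (sqNorm ξ)^2) * p.2 i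
              - (3 / (2 * (sqNorm ξ)^3)) * ξ i * (∑ j, ξ j * p.2 j))

lemma sqNorm_pos (ξ : Fin 3 → ℝ) (hξ : ξ ≠ 0) : 0 < sqNorm ξ := by
  have h : ∃ i, ξ i ≠ 0 := by
    by_contra h
    push_neg at h
    exact hξ (funext h)
  obtain ⟨i, hi⟩ := h
  have h2 : 0 < ξ i ^ 2 := by positivity
  unfold sqNorm
  refine lt_of_lt_of_le h2 ?_
  exact Finset.single_le_sum (f := fun j => ξ j ^ 2) (fun j _ => by positivity)
    (Finset.mem_univ i)

set_option maxHeartbeats 2000000 in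
/-- for ξ ≠ 0 the symbol σ_ξ is a linear isomorphism. -/
theorem symbol_is_linear_isomorphism (ξ : Fin 3 → ℝ) (hξ : ξ ≠ 0) :
    IsLinearMap ℝ (symbolMap ξ) ∧ Function.Bijective (symbolMap ξ) := by
  have hs : sqNorm ξ ≠ 0 := ne_of_gt (sqNorm_pos ξ hξ)
  constructor
  · constructor
    · intro p q
      simp only [symbolMap, Prod.fst_add, Prod.snd_add, Prod.mk_add_mk, Prod.mk.injEq,
        Pi.add_apply]
      constructor
      · ring
      · funext i
        simp only [Fin.sum_univ_three, Pi.add_apply]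
        ring
    · intro c p
      simp only [symbolMap, Prod.smul_fst, Prod.smul_snd, Prod.smul_mk, Prod.mk.injEq,
        Pi.smul_apply, smul_eq_mul]
      constructor
      · ring
      · funext i
        simp only [Fin.sum_univ_three, Pi.smul_apply, smul_eq_mul]
        ring
  · rw [Function.bijective_iff_has_inverse]
    refine ⟨invMap ξ, ?_, ?_⟩
    · intro p
      have hs' : ξ 0 ^ 2 + ξ 1 ^ 2 + ξ 2 ^ 2 ≠ 0 := by
        simpa [sqNorm, Fin.sum_univ_three] using hs
      simp only [symbolMap, invMap, sqNorm, Fin.sum_univ_three]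
      refine Prod.ext ?_ ?_
      · field_simp
      · funext i
        field_simp
        ring
    · intro p
      have hs' : ξ 0 ^ 2 + ξ 1 ^ 2 + ξ 2 ^ 2 ≠ 0 := by
        simpa [sqNorm, Fin.sum_univ_three] using hs
      simp only [symbolMap, invMap, sqNorm, Fin.sum_univ_three]
      refine Prod.ext ?_ ?_
      · field_simp
      · funext i
        field_simp
        ring
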